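/- Let G be a group generated by a finite set S, equipped with the word metric d_S, and let H ≤ G be a subgroup. Let A ≥ 0 and let C be a deep, irreducible (1,A)-coarse complementary component of H such that G \ C is also deep. If H' := {h ∈ H : h·(C \ N_A(H)) = C \ N_A(H)} is the stabilizer in H of C \ N_A(H) under left multiplication, then e(G,H') > 1. -/

import Mathlib

open Metric Set
open scoped NNReal Pointwise

/-- The closed `r`-neighbourhood `N_r(A)` of a subset `A` of a metric space. -/
def nbhd {X : Type*} [PseudoMetricSpace X] (r : ℝ≥0) (A : Set X) : Set X :=
  {x : X | ∃ a ∈ A, nndist x a ≤ r}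

/-- The word length of `g` with respect to a generating set `S`: the least `n` such
that `g` is a product of `n` elements of `S ∪ S⁻¹`. -/
noncomputable def wordLength {G : Type*} [Group G] (S : Set G) (g : G) : ℕ :=
  sInf {n : ℕ | ∃ l : List G, (∀ x ∈ l, x ∈ S ∨ x⁻¹ ∈ S) ∧ l.prod = g ∧ l.length = n}

/-- The metric on `G` is the word metric with respect to `S`. -/
def IsWordMetric {G : Type*} [Group G] [MetricSpace G] (S : Set G) : Prop :=
  ∀ g h : G, dist g h = wordLength S (g⁻¹ * h)

/-- A subset `A ⊆ G` is `H`-finite if `A ⊆ H·R` for some finite `R ⊆ G`. -/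
def HFinite {G : Type*} [Group G] (H : Subgroup G) (A : Set G) : Prop :=
  ∃ R : Set G, R.Finite ∧ A ⊆ (H : Set G) * R

/-- The coarse `r`-boundary `∂_r C := {x ∈ X \ C : d(x,C) ≤ r}`. -/
def coarseBoundary {X : Type*} [PseudoMetricSpace X] (r : ℝ≥0) (C : Set X) : Set X :=
  {x : X | x ∉ C ∧ ∃ c ∈ C, nndist x c ≤ r}

/-- `C` is an `(r,A)`-coarse complementary component of `W`:
`∂_r (C \ N_A(W)) ⊆ N_A(W)`. -/
def IsCCC {X : Type*} [PseudoMetricSpace X] (r A : ℝ≥0) (W C : Set X) : Prop :=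
  coarseBoundary r (C \ nbhd A W) ⊆ nbhd A W

/-- `C` is a coarse complementary component of `W`, i.e. an `(r,A)`-coarse complementary
component for some `r ≥ 1`, `A ≥ 0`. -/
def IsCoarseCompComplement {X : Type*} [PseudoMetricSpace X] (W C : Set X) : Prop :=
  ∃ r A : ℝ≥0, 1 ≤ r ∧ IsCCC r A W C

/-- A coarse complementary component is shallow if contained in some neighbourhood of
`W`, and deep otherwise. -/
def IsShallow {X : Type*} [PseudoMetricSpace X] (W C : Set X) : Prop :=
  ∃ R : ℝ≥0, C ⊆ nbhd R W

/-- The right coset space `H\G`. -/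
abbrev RightCoset {G : Type*} [Group G] (H : Subgroup G) :=
  Quotient (QuotientGroup.rightRel H)

/-- Right translation `Hx ↦ Hxg` on the right coset space `H\G`. -/
def rcosMul {G : Type*} [Group G] (H : Subgroup G) (g : G) :
    RightCoset H → RightCoset H :=
  Quotient.map' (fun x => x * g) (by
    intro a b hab
    rw [QuotientGroup.rightRel_apply] at hab ⊢
    simpa [mul_inv_rev, mul_assoc] using hab)

/-- `F(H\G)`: the subspace of `P(H\G) = (H\G → ℤ/2)` consisting of (indicator
functions of) finite subsets of `H\G`. -/
def finiteSupport (α : Type*) : Submodule (ZMod 2) (α → ZMod 2) where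
  carrier := {f | {a : α | f a ≠ 0}.Finite}
  add_mem' := by
    rintro f g hf hg
    refine (hf.union hg).subset ?_
    intro a ha
    by_contra h
    simp only [Set.mem_union, Set.mem_setOf_eq, not_or, not_not] at h
    exact ha (by simp [Set.mem_setOf_eq, Pi.add_apply, h.1, h.2])
  zero_mem' := by
    have : {a : α | (0 : α → ZMod 2) a ≠ 0} = ∅ := by
      ext a; simp
    simp only [Set.mem_setOf_eq, this]
    exact Set.finite_empty
  smul_mem' := by
    intro c f hf
    refine hf.subset ?_
    intro a ha
    by_contra h
    simp only [Set.mem_setOf_eq, not_not] at h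
    exact ha (by simp [Set.mem_setOf_eq, Pi.smul_apply, h])

lemma rcosMul_rcosMul {G : Type*} [Group G] (H : Subgroup G) (g g' : G)
    (q : RightCoset H) : rcosMul H g (rcosMul H g' q) = rcosMul H (g' * g) q := by
  induction q using Quotient.inductionOn' with
  | h x => simp [rcosMul, Quotient.map'_mk'', mul_assoc]

lemma rcosMul_injective {G : Type*} [Group G] (H : Subgroup G) (g : G) :
    Function.Injective (rcosMul H g) := by
  apply Function.LeftInverse.injective (g := rcosMul H g⁻¹)
  intro q
  rw [rcosMul_rcosMul]
  induction q using Quotient.inductionOn' with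
  | h x => simp [rcosMul, Quotient.map'_mk'']

/-- The right-translation action `C ↦ Cg` of `g ∈ G` on `P(H\G)/F(H\G)`. -/
noncomputable def endsMap {G : Type*} [Group G] (H : Subgroup G) (g : G) :
    ((RightCoset H → ZMod 2) ⧸ finiteSupport (RightCoset H)) →ₗ[ZMod 2]
      ((RightCoset H → ZMod 2) ⧸ finiteSupport (RightCoset H)) :=
  Submodule.mapQ _ _ (LinearMap.funLeft (ZMod 2) (ZMod 2) (rcosMul H g⁻¹))
    (by
      intro f hf
      have : {c : RightCoset H | f (rcosMul H g⁻¹ c) ≠ 0} =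
          rcosMul H g⁻¹ ⁻¹' {c : RightCoset H | f c ≠ 0} := rfl
      show {c : RightCoset H | f (rcosMul H g⁻¹ c) ≠ 0}.Finite
      rw [this]
      exact Set.Finite.preimage (rcosMul_injective H g⁻¹).injOn hf)

/-- The subspace of `G`-fixed vectors of `P(H\G)/F(H\G)`; its `ℤ/2`-dimension is the
number of relative ends `e(G,H)` of Houghton and Scott. -/
noncomputable def endsFixed {G : Type*} [Group G] (H : Subgroup G) :
    Submodule (ZMod 2) ((RightCoset H → ZMod 2) ⧸ finiteSupport (RightCoset H)) where
  carrier := {v | ∀ g : G, endsMap H g v = v}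
  add_mem' := by
    intro u v hu hv g
    rw [map_add, hu g, hv g]
  zero_mem' := by
    intro g
    exact map_zero _
  smul_mem' := by
    intro c v hv g
    rw [map_smul, hv g]

/-- The graph whose vertex set is `G \ N_A(W)` and in which distinct vertices `x, y`
are adjacent iff `d(x,y) ≤ r`. -/
def complementGraph {X : Type*} [PseudoMetricSpace X] (r A : ℝ≥0) (W : Set X) :
    SimpleGraph {x : X // x ∉ nbhd A W} where
  Adj u v := u ≠ v ∧ nndist (u : X) (v : X) ≤ r
  symm := by
    refine ⟨?_⟩
    intro u v h
    exact ⟨h.1.symm, by rw [nndist_comm]; exact h.2⟩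
  loopless := by
    refine ⟨?_⟩
    intro u h
    exact h.1 rfl

/-- `C` is an irreducible `(r,A)`-coarse complementary component of `W`: it is an
`(r,A)`-coarse complementary component and `C \ N_A(W)` is the vertex set of a single
connected component of the graph on `X \ N_A(W)` with adjacency `d(x,y) ≤ r`. -/
def IsIrreducibleCCC {X : Type*} [PseudoMetricSpace X] (r A : ℝ≥0) (W C : Set X) :
    Prop :=
  IsCCC r A W C ∧ ∃ u : {x : X // x ∉ nbhd A W}, (u : X) ∈ C ∧
    ∀ v : {x : X // x ∉ nbhd A W},
      ((v : X) ∈ C ↔ (complementGraph r A W).Reachable u v)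

/-!
`H'` stabilises `C' = C \ N_A(H)`, so `C'` has a well-defined image `E` in `H'\G`, with
`x ∈ C' ↔ H'x ∈ E`. Since `C` has no `1`-boundary outside `N_A(H)`, whenever exactly one of
`x`, `xg` lies in `C'`, that one is within `A + |g|` of `H`. By irreducibility, two points of
`C'` in the same coset `Hp` differ by an element of `H'`, so by local finiteness of the word
metric only finitely many `H'`-cosets meet `C' ∩ N_K(H)`; hence `E` is almost invariant under
right translation. Deepness of `C` and of `G \ C` makes `E` and its complement infinite, so
their classes are two independent `G`-fixed vectors of `P(H'\G)/F(H'\G)`.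
-/

open scoped symmDiff

theorem nbhd_mono {X : Type*} [PseudoMetricSpace X] {W : Set X} {r r' : ℝ≥0} (h : r ≤ r') :
    nbhd r W ⊆ nbhd r' W :=
  fun _ ⟨a, ha, hd⟩ => ⟨a, ha, hd.trans h⟩

theorem IsShallow.of_diff_nbhd {X : Type*} [PseudoMetricSpace X] {W C : Set X} {A : ℝ≥0}
    (h : IsShallow W (C \ nbhd A W)) : IsShallow W C := by
  obtain ⟨R, hR⟩ := h
  refine ⟨max R A, fun x hx => ?_⟩
  by_cases hxA : x ∈ nbhd A W
  · exact nbhd_mono le_sup_right hxA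
  · exact nbhd_mono le_sup_left (hR ⟨hx, hxA⟩)

section WordMetric

variable {G : Type*} [Group G] {S : Set G}

theorem wordLength_spec {x : G} (hx : x ∈ Subgroup.closure S) :
    ∃ l : List G, (∀ s ∈ l, s ∈ S ∨ s⁻¹ ∈ S) ∧ l.prod = x ∧ l.length = wordLength S x := by
  rw [← Subgroup.mem_toSubmonoid, Subgroup.closure_toSubmonoid] at hx
  obtain ⟨l, hlS, hl⟩ := Submonoid.exists_list_of_mem_closure hx
  exact Nat.sInf_mem
    (s := {n | ∃ l : List G, (∀ s ∈ l, s ∈ S ∨ s⁻¹ ∈ S) ∧ l.prod = x ∧ l.length = n})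
    ⟨l.length, l, fun s hs => (hlS s hs).imp id Set.mem_inv.mp, hl, rfl⟩

variable [MetricSpace G]

theorem IsWordMetric.nndist_eq (hword : IsWordMetric S) (x y : G) :
    nndist x y = wordLength S (x⁻¹ * y) :=
  NNReal.coe_injective (by simpa using hword x y)

theorem IsWordMetric.isIsometricSMul (hword : IsWordMetric S) : IsIsometricSMul G G :=
  ⟨fun k => Isometry.of_nndist_eq fun x y => by
    simp only [smul_eq_mul, hword.nndist_eq, mul_inv_rev, mul_assoc, inv_mul_cancel_left]⟩

theorem IsWordMetric.nndist_mul_le_one (hword : IsWordMetric S) {s : G} (hs : s ∈ S ∨ s⁻¹ ∈ S)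
    (x : G) : nndist x (x * s) ≤ 1 := by
  rw [hword.nndist_eq, inv_mul_cancel_left]
  exact_mod_cast (Nat.sInf_le ⟨[s], by simpa using hs, by simp, rfl⟩ : wordLength S s ≤ 1)

theorem IsWordMetric.finite_nndist_one_le (hSfin : S.Finite) (hSgen : Subgroup.closure S = ⊤)
    (hword : IsWordMetric S) (K : ℝ≥0) : {x : G | nndist 1 x ≤ K}.Finite := by
  have : Finite ↥(S ∪ S⁻¹) := (hSfin.union hSfin.inv).to_subtype
  refine ((List.finite_length_le ↥(S ∪ S⁻¹) ⌊K⌋₊).image fun l => (l.map (↑)).prod).subset ?_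
  intro x hx
  obtain ⟨l, hlS, rfl, hlen⟩ := wordLength_spec (hSgen ▸ Subgroup.mem_top x)
  lift l to List ↥(S ∪ S⁻¹) using fun s hs => (hlS s hs).imp id Set.mem_inv.mpr
  refine ⟨l, Nat.le_floor ?_, rfl⟩
  rwa [← List.length_map, hlen, ← one_mul (List.prod _), ← inv_one, ← hword.nndist_eq]

variable {A : ℝ≥0} {W C : Set G}

theorem IsCCC.mem_nbhd_of_mul_prod_notMem (hword : IsWordMetric S) (hccc : IsCCC 1 A W C) :
    ∀ l : List G, (∀ s ∈ l, s ∈ S ∨ s⁻¹ ∈ S) → ∀ {x : G}, x ∈ C \ nbhd A W →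
      x * l.prod ∉ C \ nbhd A W → x ∈ nbhd (A + l.length) W
  | [], _, _, hx, hxl => absurd (by simpa using hx) hxl
  | s :: l, hl, x, hx, hxl => by
    have hxs : nndist x (x * s) ≤ 1 := hword.nndist_mul_le_one (hl s (.head l)) x
    obtain ⟨w, hw, hd⟩ : x * s ∈ nbhd (A + l.length) W := by
      by_cases hsA : x * s ∈ nbhd A W
      · exact nbhd_mono le_self_add hsA
      by_cases hsC : x * s ∈ C \ nbhd A W
      · exact hccc.mem_nbhd_of_mul_prod_notMem hword l (fun t ht => hl t (.tail s ht)) hsC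
          (by rwa [mul_assoc, ← List.prod_cons])
      · exact absurd (hccc ⟨hsC, x, hx, by rwa [nndist_comm]⟩) hsA
    refine ⟨w, hw, ?_⟩
    calc nndist x w ≤ nndist x (x * s) + nndist (x * s) w := nndist_triangle _ _ _
      _ ≤ 1 + (A + l.length) := add_le_add hxs hd
      _ = A + (s :: l).length := by rw [List.length_cons]; push_cast; ring

theorem IsCCC.mem_nbhd_add_nndist (hSgen : Subgroup.closure S = ⊤) (hword : IsWordMetric S)
    (hccc : IsCCC 1 A W C) {x y : G} (hx : x ∈ C \ nbhd A W) (hy : y ∉ C \ nbhd A W) :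
    x ∈ nbhd (A + nndist x y) W := by
  obtain ⟨l, hlS, hl, hlen⟩ := wordLength_spec (hSgen ▸ Subgroup.mem_top (x⁻¹ * y))
  rw [hword.nndist_eq, ← hlen]
  exact hccc.mem_nbhd_of_mul_prod_notMem hword l hlS hx (by rwa [hl, mul_inv_cancel_left])

end WordMetric

section IrreducibleComponent

variable {X : Type*} [PseudoMetricSpace X] {r A : ℝ≥0} {W C : Set X}

theorem IsIrreducibleCCC.reachable_of_mem (hirr : IsIrreducibleCCC r A W C) {x y : X}
    (hx : x ∈ C \ nbhd A W) (hy : y ∈ C \ nbhd A W) :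
    (complementGraph r A W).Reachable ⟨x, hx.2⟩ ⟨y, hy.2⟩ := by
  obtain ⟨-, u, -, hu⟩ := hirr
  exact ((hu ⟨x, hx.2⟩).mp hx.1).symm.trans ((hu ⟨y, hy.2⟩).mp hy.1)

theorem IsIrreducibleCCC.mem_of_reachable (hirr : IsIrreducibleCCC r A W C) {x y : X}
    (hx : x ∈ C \ nbhd A W) (hy : y ∉ nbhd A W)
    (hxy : (complementGraph r A W).Reachable ⟨x, hx.2⟩ ⟨y, hy⟩) : y ∈ C \ nbhd A W := by
  obtain ⟨-, u, -, hu⟩ := hirr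
  exact ⟨(hu ⟨y, hy⟩).mpr (((hu ⟨x, hx.2⟩).mp hx.1).trans hxy), hy⟩

end IrreducibleComponent

section Stabilizer

variable {G : Type*} [Group G] [MetricSpace G] [IsIsometricSMul G G] {H : Subgroup G}
  {r A : ℝ≥0} {C : Set G}

theorem mul_mem_nbhd_subgroup_iff {w : G} (hw : w ∈ H) {x : G} :
    w * x ∈ nbhd r (H : Set G) ↔ x ∈ nbhd r (H : Set G) := by
  suffices ∀ {w}, w ∈ H → ∀ {x}, x ∈ nbhd r (H : Set G) → w * x ∈ nbhd r (H : Set G) from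
    ⟨fun h => by simpa using this (H.inv_mem hw) h, this hw⟩
  rintro w hw x ⟨a, ha, hd⟩
  exact ⟨w * a, H.mul_mem hw ha, by rwa [nndist_mul_left]⟩

def complementGraph.mulLeft {w : G} (hw : w ∈ H) :
    complementGraph r A (H : Set G) →g complementGraph r A (H : Set G) where
  toFun v := ⟨w * v, (mul_mem_nbhd_subgroup_iff hw).not.mpr v.2⟩
  map_rel' := fun ⟨hne, hd⟩ =>
    ⟨fun h => hne (Subtype.ext (mul_left_cancel (congrArg Subtype.val h))),
      by rwa [nndist_mul_left]⟩

theorem IsIrreducibleCCC.mul_mem_of_mul_mem (hirr : IsIrreducibleCCC r A (H : Set G) C)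
    {w x z : G} (hw : w ∈ H) (hx : x ∈ C \ nbhd A (H : Set G))
    (hwx : w * x ∈ C \ nbhd A (H : Set G)) (hz : z ∈ C \ nbhd A (H : Set G)) :
    w * z ∈ C \ nbhd A (H : Set G) :=
  hirr.mem_of_reachable hwx _ ((hirr.reachable_of_mem hx hz).map (complementGraph.mulLeft hw))

theorem IsIrreducibleCCC.mem_inf_stabilizer (hirr : IsIrreducibleCCC r A (H : Set G) C)
    {w x : G} (hw : w ∈ H) (hx : x ∈ C \ nbhd A (H : Set G))
    (hwx : w * x ∈ C \ nbhd A (H : Set G)) :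
    w ∈ H ⊓ MulAction.stabilizer G (C \ nbhd A (H : Set G)) := by
  refine ⟨hw, Set.Subset.antisymm ?_ fun z hz => ?_⟩
  · rintro _ ⟨z, hz, rfl⟩
    exact hirr.mul_mem_of_mul_mem hw hx hwx hz
  · have hx' : w⁻¹ * (w * x) ∈ C \ nbhd A (H : Set G) := by rwa [inv_mul_cancel_left]
    exact ⟨w⁻¹ * z, hirr.mul_mem_of_mul_mem (H.inv_mem hw) hwx hx' hz, mul_inv_cancel_left w z⟩

end Stabilizer

section Cosets

variable {G : Type*} [Group G]

theorem rcosMul_mk (K : Subgroup G) (g x : G) :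
    rcosMul K g (Quotient.mk'' x) = Quotient.mk'' (x * g) :=
  rfl

theorem mk_mem_image_mk_iff {K : Subgroup G} {Y : Set G} (hK : K ≤ MulAction.stabilizer G Y)
    {x : G} : (Quotient.mk'' x : RightCoset K) ∈ Quotient.mk'' '' Y ↔ x ∈ Y := by
  refine ⟨fun ⟨y, hy, hyx⟩ => ?_, fun hx => ⟨x, hx, rfl⟩⟩
  have hxy : x * y⁻¹ ∈ K := QuotientGroup.rightRel_apply.mp (Quotient.exact' hyx)
  rw [← MulAction.mem_stabilizer_iff.mp (hK hxy)]
  exact ⟨y, hy, inv_mul_cancel_right x y⟩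

variable [MetricSpace G] [IsIsometricSMul G G] {H : Subgroup G}

theorem isShallow_of_finite_image_mk {K : Subgroup G} (hKH : K ≤ H) {Y : Set G}
    (hY : (Quotient.mk'' '' Y : Set (RightCoset K)).Finite) : IsShallow (H : Set G) Y := by
  obtain ⟨R, hR⟩ := (hY.image fun q => nndist 1 q.out).bddAbove
  refine ⟨R, fun x hx => ?_⟩
  set t : G := (Quotient.mk'' x : RightCoset K).out
  have hxt : x * t⁻¹ ∈ K :=
    QuotientGroup.rightRel_apply.mp (Quotient.exact' (Quotient.out_eq' (Quotient.mk'' x)))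
  refine ⟨x * t⁻¹, hKH hxt, ?_⟩
  calc nndist x (x * t⁻¹) = nndist 1 t := by
        rw [← nndist_mul_left (x * t⁻¹) 1 t, mul_one, inv_mul_cancel_right, nndist_comm]
    _ ≤ R := hR ⟨_, ⟨x, hx, rfl⟩, rfl⟩

variable {r A : ℝ≥0} {C : Set G}

theorem IsIrreducibleCCC.finite_image_mk_inter_nbhd (hirr : IsIrreducibleCCC r A (H : Set G) C)
    {K : ℝ≥0} (hball : {x : G | nndist 1 x ≤ K}.Finite) :
    (Quotient.mk'' '' (C \ nbhd A (H : Set G) ∩ nbhd K (H : Set G)) :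
      Set (RightCoset (H ⊓ MulAction.stabilizer G (C \ nbhd A (H : Set G))))).Finite := by
  have hsub : ∀ p : G, (Quotient.mk'' '' {x ∈ C \ nbhd A (H : Set G) | x * p⁻¹ ∈ H} :
      Set (RightCoset (H ⊓ MulAction.stabilizer G (C \ nbhd A (H : Set G))))).Subsingleton := by
    rintro p _ ⟨x, ⟨hx, hxp⟩, rfl⟩ _ ⟨y, ⟨hy, hyp⟩, rfl⟩
    have hyx : y * x⁻¹ ∈ H := by simpa [mul_assoc] using H.mul_mem hyp (H.inv_mem hxp)
    exact Quotient.sound' (QuotientGroup.rightRel_apply.mpr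
      (hirr.mem_inf_stabilizer hyx hx (by rwa [inv_mul_cancel_right])))
  refine (hball.biUnion fun p _ => (hsub p).finite).subset ?_
  rintro _ ⟨x, ⟨hx, h, hh, hd⟩, rfl⟩
  refine Set.mem_biUnion (x := h⁻¹ * x) ?_ ⟨x, ⟨hx, by simpa using hh⟩, rfl⟩
  show nndist 1 (h⁻¹ * x) ≤ K
  rwa [← nndist_mul_left h, mul_one, mul_inv_cancel_left, nndist_comm]

end Cosets

section Ends

theorem one_lt_rank_of_add_ne_zero {M : Type*} [AddCommGroup M] [Module (ZMod 2) M] {v w : M}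
    (hv : v ≠ 0) (hw : w ≠ 0) (hvw : v + w ≠ 0) : 1 < Module.rank (ZMod 2) M := by
  have hli : LinearIndependent (ZMod 2) ![v, w] := LinearIndependent.pair_iff.mpr fun s t hst => by
    have hZ2 : ∀ a : ZMod 2, a = 0 ∨ a = 1 := by decide
    rcases hZ2 s with rfl | rfl <;> rcases hZ2 t with rfl | rfl <;> simp_all
  have h2 : ((2 : ℕ) : Cardinal) ≤ Module.rank (ZMod 2) M := natCast_le_rank_iff.mpr ⟨_, hli⟩
  exact lt_of_lt_of_le (by norm_num) h2

theorem mk_indicator_ne_zero {α : Type*} {E : Set α} (hE : E.Infinite) :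
    Submodule.Quotient.mk (p := finiteSupport α) (E.indicator 1) ≠ 0 := by
  rw [Ne, Submodule.Quotient.mk_eq_zero]
  intro h
  have hsupp : {a | E.indicator (1 : α → ZMod 2) a ≠ 0}.Finite := h
  exact hE (by simpa [Set.indicator_apply] using hsupp)

variable {G : Type*} [Group G] {K : Subgroup G}

theorem mk_indicator_mem_endsFixed {E : Set (RightCoset K)}
    (hE : ∀ g, ((rcosMul K g ⁻¹' E) ∆ E).Finite) :
    Submodule.Quotient.mk (E.indicator 1) ∈ endsFixed K := by
  intro g
  rw [endsMap, Submodule.mapQ_apply, Submodule.Quotient.eq]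
  refine (hE g⁻¹).subset fun q hq => ?_
  have hq : E.indicator 1 (rcosMul K g⁻¹ q) ≠ E.indicator 1 q := sub_ne_zero.mp hq
  rw [Set.mem_symmDiff, Set.mem_preimage]
  by_cases h₁ : rcosMul K g⁻¹ q ∈ E <;> by_cases h₂ : q ∈ E <;> simp_all

theorem one_lt_rank_endsFixed {E : Set (RightCoset K)}
    (hE : ∀ g, ((rcosMul K g ⁻¹' E) ∆ E).Finite) (hEinf : E.Infinite) (hEcinf : Eᶜ.Infinite) :
    1 < Module.rank (ZMod 2) (endsFixed K) := by
  have hEc : ∀ g, ((rcosMul K g ⁻¹' Eᶜ) ∆ Eᶜ).Finite := fun g => by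
    simpa only [Set.preimage_compl, compl_symmDiff_compl] using hE g
  refine one_lt_rank_of_add_ne_zero (v := ⟨_, mk_indicator_mem_endsFixed hE⟩)
    (w := ⟨_, mk_indicator_mem_endsFixed hEc⟩) ?_ ?_ ?_
  · simpa using mk_indicator_ne_zero hEinf
  · simpa using mk_indicator_ne_zero hEcinf
  · rw [Ne, ← Submodule.coe_eq_zero, Submodule.coe_add, Submodule.coe_mk, Submodule.coe_mk,
      ← Submodule.Quotient.mk_add, Set.indicator_self_add_compl, ← Set.indicator_univ (f := 1)]
    exact mk_indicator_ne_zero (hEinf.mono (Set.subset_univ E))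

end Ends

theorem IsIrreducibleCCC.finite_rcosMul_preimage_symmDiff {G : Type*} [Group G] [MetricSpace G]
    {S : Set G} (hSfin : S.Finite) (hSgen : Subgroup.closure S = ⊤) (hword : IsWordMetric S)
    {H : Subgroup G} {A : ℝ≥0} {C : Set G} (hirr : IsIrreducibleCCC 1 A (H : Set G) C) (g : G) :
    ((rcosMul (H ⊓ MulAction.stabilizer G (C \ nbhd A (H : Set G))) g ⁻¹'
        (Quotient.mk'' '' (C \ nbhd A (H : Set G)))) ∆
      (Quotient.mk'' '' (C \ nbhd A (H : Set G)) :
        Set (RightCoset (H ⊓ MulAction.stabilizer G (C \ nbhd A (H : Set G)))))).Finite := by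
  have := hword.isIsometricSMul
  set C' := C \ nbhd A (H : Set G)
  set H' := H ⊓ MulAction.stabilizer G C'
  set F : Set (RightCoset H') := Quotient.mk'' '' (C' ∩ nbhd (A + nndist 1 g) (H : Set G))
  have hF : F.Finite :=
    hirr.finite_image_mk_inter_nbhd (hword.finite_nndist_one_le hSfin hSgen _)
  have hmem (y : G) : (Quotient.mk'' y : RightCoset H') ∈ Quotient.mk'' '' C' ↔ y ∈ C' :=
    mk_mem_image_mk_iff inf_le_right
  have hg (y : G) : nndist y (y * g) = nndist 1 g := by rw [← nndist_mul_left y 1 g, mul_one]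
  refine (hF.union (hF.image (rcosMul H' g⁻¹))).subset fun q hq => ?_
  induction q using Quotient.inductionOn' with | h x => ?_
  rw [Set.mem_symmDiff, Set.mem_preimage, rcosMul_mk, hmem, hmem] at hq
  rcases hq with ⟨hxg, hx⟩ | ⟨hx, hxg⟩
  · have hnbhd := hirr.1.mem_nbhd_add_nndist hSgen hword hxg (y := x) hx
    rw [nndist_comm, hg] at hnbhd
    exact Or.inr ⟨_, ⟨x * g, ⟨hxg, hnbhd⟩, rfl⟩, by rw [rcosMul_mk, mul_inv_cancel_right]⟩
  · have hnbhd := hirr.1.mem_nbhd_add_nndist hSgen hword hx hxg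
    rw [hg] at hnbhd
    exact Or.inl ⟨x, ⟨hx, hnbhd⟩, rfl⟩

/-- Let `G` be a group with the word metric with respect to a finite
generating set `S` and `H ≤ G` a subgroup. Let `A ≥ 0` and let `C` be a deep,
irreducible `(1,A)`-coarse complementary component of `H` such that `G \ C` is also
deep. If `H'` is the stabilizer in `H` of `C \ N_A(H)` under left multiplication, then
`e(G,H') > 1`. -/
theorem ends_stabilizer_gt_one {G : Type*} [Group G] [MetricSpace G]
    (S : Set G) (hSfin : S.Finite) (hSgen : Subgroup.closure S = ⊤)
    (hword : IsWordMetric S) (H : Subgroup G) (A : ℝ≥0) (C : Set G)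
    (hirr : IsIrreducibleCCC 1 A (H : Set G) C)
    (hdeep : ¬ IsShallow (H : Set G) C)
    (hdeep' : ¬ IsShallow (H : Set G) Cᶜ) :
    (1 : Cardinal) < Module.rank (ZMod 2)
      ↥(endsFixed (H ⊓ MulAction.stabilizer G (C \ nbhd A (H : Set G)))) := by
  have := hword.isIsometricSMul
  refine one_lt_rank_endsFixed (hirr.finite_rcosMul_preimage_symmDiff hSfin hSgen hword) ?_ ?_
  · exact fun hfin => hdeep (isShallow_of_finite_image_mk inf_le_left hfin).of_diff_nbhd
  · refine fun hfin => hdeep' (isShallow_of_finite_image_mk inf_le_left (hfin.subset ?_))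
    rintro _ ⟨x, hx, rfl⟩ hxE
    exact hx ((mk_mem_image_mk_iff inf_le_right).mp hxE).1
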